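/- Let G be a connected plane-embedded graph that is not 2-connected, and let G^SD be the graph obtained by adding a vertex s0 at the centre of a smallest disk meeting the interior of every leaf block of G, joined by an edge to a nearest interior vertex of each leaf block. Then for every 2-connected graph H obtained from G by adding a single new point s and edges incident to s, the length of the longest edge of G^SD is at most the length of the longest edge of H. (That is, G^SD is an optimal 1-block closure of G.) -/

import Mathlib

open SimpleGraph Sum

noncomputable section

/-- Number of connected components of a graph. -/
def numComponents {V : Type*} (G : SimpleGraph V) : ℕ :=
  Nat.card G.ConnectedComponent

/-- `v` is a cut-vertex of `G` if deleting it increases the number of components. -/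
def IsCutVertex {V : Type*} (G : SimpleGraph V) (v : V) : Prop :=
  numComponents G < numComponents (G.induce {w | w ≠ v})

/-- Strict 2-connectivity: at least 3 vertices and connected after deleting any vertex. -/
def StrictTwoConnected {V : Type*} (G : SimpleGraph V) : Prop :=
  3 ≤ Nat.card V ∧ ∀ v : V, (G.induce {w | w ≠ v}).Connected

/-- Conventional 2-connectivity: connected with no cut-vertex (so K1, K2 count). -/
def TwoConnConv {V : Type*} (G : SimpleGraph V) : Prop :=
  G.Connected ∧ ∀ v : V, ¬ IsCutVertex G v

/-- An edge is critical if its deletion destroys (strict) 2-connectivity. -/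
def IsCriticalEdge {V : Type*} (G : SimpleGraph V) (e : Sym2 V) : Prop :=
  e ∈ G.edgeSet ∧ ¬ StrictTwoConnected (G.deleteEdges {e})

/-- A block: a maximal 2-connected subgraph (conventionally, K1 and K2 are 2-connected). -/
def IsBlock {V : Type*} (G : SimpleGraph V) (H : G.Subgraph) : Prop :=
  TwoConnConv H.coe ∧ ∀ H' : G.Subgraph, H ≤ H' → TwoConnConv H'.coe → H' = H

/-- A leaf block: a block containing exactly one cut-vertex of `G`. -/
def IsLeafBlock {V : Type*} (G : SimpleGraph V) (H : G.Subgraph) : Prop :=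
  IsBlock G H ∧ ∃! v : V, v ∈ H.verts ∧ IsCutVertex G v

/-- An isolated component: a maximal connected subgraph. -/
def IsIsolatedComponent {V : Type*} (G : SimpleGraph V) (H : G.Subgraph) : Prop :=
  H.coe.Connected ∧ ∀ H' : G.Subgraph, H ≤ H' → H'.coe.Connected → H' = H

/-- Length of the longest edge of a plane-embedded graph. -/
def maxEdgeLen {W : Type*} (H : SimpleGraph W) (p : W → EuclideanSpace ℝ (Fin 2)) : ℝ :=
  sSup {d : ℝ | ∃ a b : W, H.Adj a b ∧ d = dist (p a) (p b)}

section Aux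

variable {W : Type*}

lemma cc_subsingleton_iff {G : SimpleGraph W} :
    Subsingleton G.ConnectedComponent ↔ G.Preconnected := by
  constructor
  · intro h u v
    exact (SimpleGraph.ConnectedComponent.eq).mp (Subsingleton.elim _ _)
  · intro h
    constructor
    intro a b
    induction a using SimpleGraph.ConnectedComponent.ind
    induction b using SimpleGraph.ConnectedComponent.ind
    exact SimpleGraph.ConnectedComponent.eq.mpr (h _ _)

lemma cc_finite [Finite W] (G : SimpleGraph W) : Finite G.ConnectedComponent :=
  Finite.of_surjective G.connectedComponentMk (Quot.mk_surjective)

lemma numComponents_le_one_iff [Finite W] (G : SimpleGraph W) :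
    numComponents G ≤ 1 ↔ G.Preconnected := by
  have := cc_finite G
  have := Fintype.ofFinite G.ConnectedComponent
  rw [numComponents, Nat.card_eq_fintype_card, Fintype.card_le_one_iff_subsingleton,
    cc_subsingleton_iff]

lemma numComponents_eq_one [Finite W] {G : SimpleGraph W} (h : G.Connected) :
    numComponents G = 1 := by
  rw [numComponents, Nat.card_eq_one_iff_unique]
  refine ⟨cc_subsingleton_iff.mpr h.preconnected, ?_⟩
  obtain ⟨v⟩ := h.nonempty
  exact ⟨G.connectedComponentMk v⟩

lemma one_lt_numComponents [Finite W] {G : SimpleGraph W} {u v : W}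
    (h : ¬ G.Reachable u v) : 1 < numComponents G := by
  have := cc_finite G
  have := Fintype.ofFinite G.ConnectedComponent
  rw [numComponents, Nat.card_eq_fintype_card, Fintype.one_lt_card_iff_nontrivial]
  exact ⟨G.connectedComponentMk u, G.connectedComponentMk v,
    fun hc => h (SimpleGraph.ConnectedComponent.eq.mp hc)⟩

lemma not_cutVertex_iff [Finite W] {G : SimpleGraph W} (hG : G.Connected) (v : W) :
    ¬ IsCutVertex G v ↔ (G.induce {w | w ≠ v}).Preconnected := by
  rw [IsCutVertex, not_lt, numComponents_eq_one hG, numComponents_le_one_iff]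

end Aux

section Aux2
variable {W : Type*} {G : SimpleGraph W}

/-- iso between deleting a vertex from a subgraph and inducing the coe away from it -/
def delIso (H : G.Subgraph) (v : H.verts) :
    (H.deleteVerts {(v : W)}).coe ≃g (H.coe.induce {w | w ≠ v}) where
  toFun x := ⟨⟨x.1, x.2.1⟩, fun h => x.2.2 (by
    simp only [Set.mem_singleton_iff]
    exact congrArg Subtype.val h)⟩
  invFun x := ⟨x.1.1, x.1.2, fun h => x.2 (Subtype.ext (by simpa using h))⟩
  left_inv x := rfl
  right_inv x := rfl
  map_rel_iff' := by
    rintro ⟨x, hx⟩ ⟨y, hy⟩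
    simp only [Equiv.coe_fn_mk, comap_adj, Function.Embedding.coe_subtype,
      Subgraph.coe_adj, Subgraph.deleteVerts_adj]
    constructor
    · intro h
      exact ⟨hx.1, hx.2, hy.1, hy.2, h⟩
    · intro h
      exact h.2.2.2.2

lemma deleteVerts_eq_self {H : G.Subgraph} {s : Set W} (h : ∀ x ∈ H.verts, x ∉ s) :
    H.deleteVerts s = H := by
  ext x y
  · simp only [Subgraph.deleteVerts_verts, Set.mem_diff, and_iff_left_iff_imp]
    exact h x
  · simp only [Subgraph.deleteVerts_adj]
    exact ⟨fun h' => h'.2.2.2.2, fun h' => ⟨H.edge_vert h', h _ (H.edge_vert h'),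
      H.edge_vert h'.symm, h _ (H.edge_vert h'.symm), h'⟩⟩

lemma del_preconnected [Finite W] {H : G.Subgraph}
    (h2 : TwoConnConv H.coe) (a : W) : ((H.deleteVerts {a}).coe).Preconnected := by
  by_cases ha : a ∈ H.verts
  · have hp := (not_cutVertex_iff h2.1 ⟨a, ha⟩).mp (h2.2 ⟨a, ha⟩)
    exact hp.map (delIso H ⟨a, ha⟩).symm.toHom (delIso H ⟨a, ha⟩).symm.toEquiv.surjective
  · rw [deleteVerts_eq_self (fun x hx hxs => ha (by rwa [Set.mem_singleton_iff.mp hxs] at hx))]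
    exact h2.1.preconnected

lemma twoConnConv_of [Finite W] {H : G.Subgraph}
    (hc : H.Connected) (hdel : ∀ a : W, ((H.deleteVerts {a}).coe).Preconnected) :
    TwoConnConv H.coe := by
  refine ⟨hc.coe, fun v => (not_cutVertex_iff hc.coe v).mpr ?_⟩
  exact (hdel v).map (delIso H v).toHom (delIso H v).toEquiv.surjective

lemma reach_of_walk {H : G.Subgraph} {u w : W} (p : G.Walk u w)
    (hp : p.toSubgraph ≤ H) :
    H.coe.Reachable ⟨u, hp.1 p.start_mem_verts_toSubgraph⟩ ⟨w, hp.1 p.end_mem_verts_toSubgraph⟩ := by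
  have hc := p.toSubgraph_connected
  exact Reachable.map (Subgraph.inclusion hp)
    (hc ⟨u, p.start_mem_verts_toSubgraph⟩ ⟨w, p.end_mem_verts_toSubgraph⟩)

lemma toSubgraph_le_deleteVerts {u w : W} {p : G.Walk u w} {H : G.Subgraph} {s : Set W}
    (h1 : p.toSubgraph ≤ H) (h2 : ∀ x ∈ p.support, x ∉ s) :
    p.toSubgraph ≤ H.deleteVerts s := by
  constructor
  · intro x hx
    exact ⟨h1.1 hx, h2 x ((Walk.mem_verts_toSubgraph p).mp hx)⟩
  · intro x y hxy
    rw [Subgraph.deleteVerts_adj]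
    have hx := (Walk.mem_verts_toSubgraph p).mp (p.toSubgraph.edge_vert hxy)
    have hy := (Walk.mem_verts_toSubgraph p).mp (p.toSubgraph.edge_vert hxy.symm)
    exact ⟨h1.1 (p.toSubgraph.edge_vert hxy), h2 x hx,
      h1.1 (p.toSubgraph.edge_vert hxy.symm), h2 y hy, h1.2 hxy⟩

end Aux2

section Aux3
variable {W : Type*} {G : SimpleGraph W}

open scoped Classical

lemma dropUntil_toSubgraph_le {u v w : W} (p : G.Walk v w) (h : u ∈ p.support) :
    (p.dropUntil u h).toSubgraph ≤ p.toSubgraph := by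
  conv_rhs => rw [← p.take_spec h]
  rw [Walk.toSubgraph_append]
  exact le_sup_right

lemma path_escape {x b : W} (p : G.Walk x b) (hp : p.IsPath) (a : W) :
    ∀ u, ∀ _ : u ∈ p.support, u ≠ a → ∃ (d : W) (q : G.Walk u d), (d = x ∨ d = b) ∧
      q.toSubgraph ≤ p.toSubgraph ∧ a ∉ q.support := by
  induction p with
  | nil =>
    rintro u hu hua
    rw [Walk.support_nil, List.mem_singleton] at hu
    subst hu
    exact ⟨u, Walk.nil, Or.inl rfl, le_refl _, by simpa using Ne.symm hua⟩
  | @cons x v b h q ih =>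
    rintro u hu hua
    rw [Walk.support_cons, List.mem_cons] at hu
    rw [Walk.cons_isPath_iff] at hp
    rcases hu with rfl | hu
    · refine ⟨u, Walk.nil, Or.inl rfl, ?_, by simpa using Ne.symm hua⟩
      simp only [Walk.toSubgraph]
      refine le_trans ?_ le_sup_left
      rw [SimpleGraph.singletonSubgraph_le_iff]
      simp
    · by_cases haq : a ∈ q.support
      · obtain ⟨d, w, hd, hle, haw⟩ := ih hp.1 u hu hua
        rcases hd with hd | hd <;> subst hd
        · refine ⟨x, w.append (Walk.cons h.symm Walk.nil), Or.inl rfl, ?_, ?_⟩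
          · rw [Walk.toSubgraph_append, Walk.toSubgraph_cons_nil_eq_subgraphOfAdj,
              SimpleGraph.subgraphOfAdj_symm]
            simp only [Walk.toSubgraph]
            exact sup_le (le_trans hle le_sup_right) le_sup_left
            exact h
          · rw [Walk.mem_support_append_iff]
            rintro (h' | h')
            · exact haw h'
            · rw [Walk.support_cons, Walk.support_nil, List.mem_cons, List.mem_singleton] at h'
              rcases h' with h' | h'
              · exact haw (h' ▸ w.end_mem_support)
              · exact hp.2 (h' ▸ haq)
        · exact ⟨_, w, Or.inr rfl, le_trans hle le_sup_right, haw⟩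
      · refine ⟨b, q.dropUntil u hu, Or.inr rfl, ?_, ?_⟩
        · refine le_trans (dropUntil_toSubgraph_le q hu) ?_
          simp only [Walk.toSubgraph]
          exact le_sup_right
        · intro h'
          exact haq (q.support_dropUntil_subset hu h')

end Aux3

section Aux4
variable {W : Type*} {G : SimpleGraph W}

lemma deleteVerts_sup {H K : G.Subgraph} {s : Set W} :
    (H ⊔ K).deleteVerts s = H.deleteVerts s ⊔ K.deleteVerts s := by
  ext x y
  · simp only [Subgraph.deleteVerts_verts, Subgraph.verts_sup, Set.union_diff_distrib,
      Set.mem_union, Set.mem_diff]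
  · simp only [Subgraph.deleteVerts_adj, Subgraph.sup_adj]
    constructor
    · rintro ⟨hxv, hxs, hyv, hys, hadj | hadj⟩
      · exact Or.inl ⟨H.edge_vert hadj, hxs, H.edge_vert hadj.symm, hys, hadj⟩
      · exact Or.inr ⟨K.edge_vert hadj, hxs, K.edge_vert hadj.symm, hys, hadj⟩
    · rintro (⟨hxv, hxs, hyv, hys, hadj⟩ | ⟨hxv, hxs, hyv, hys, hadj⟩)
      · exact ⟨Or.inl hxv, hxs, Or.inl hyv, hys, Or.inl hadj⟩
      · exact ⟨Or.inr hxv, hxs, Or.inr hyv, hys, Or.inr hadj⟩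

lemma ear [Finite W] {Y : G.Subgraph} (hY : TwoConnConv Y.coe)
    {y c : W} (hy : y ∈ Y.verts) (hc : c ∈ Y.verts) (hyc : y ≠ c)
    (P : G.Walk y c) (hP : P.IsPath) : TwoConnConv (Y ⊔ P.toSubgraph).coe := by
  have hYconn : Y.Connected := ⟨hY.1⟩
  have hsup : (Y ⊔ P.toSubgraph).Connected := by
    refine Subgraph.connected_sup hYconn.preconnected P.toSubgraph_connected.preconnected ⟨y, hy, ?_⟩
    exact P.start_mem_verts_toSubgraph
  refine twoConnConv_of hsup ?_
  intro a
  rw [deleteVerts_sup]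
  set B := Y.deleteVerts {a} with hB
  set Q := P.toSubgraph.deleteVerts {a} with hQ
  have hBpre : B.coe.Preconnected := del_preconnected hY a
  -- B has a vertex
  have hBne : ∃ t, t ∈ B.verts := by
    by_cases hay : a = y
    · exact ⟨c, hc, by simp [Set.mem_singleton_iff, (hay ▸ hyc : a ≠ c).symm]⟩
    · exact ⟨y, hy, by simp [Set.mem_singleton_iff, Ne.symm hay]⟩
  -- every vertex of B ⊔ Q reaches a vertex of B
  have anchor : ∀ u, ∀ hu : u ∈ (B ⊔ Q).verts, ∃ t, ∃ ht : t ∈ B.verts,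
      (B ⊔ Q).coe.Reachable ⟨u, hu⟩ ⟨t, Set.mem_union_left _ ht⟩ := by
    intro u hu
    rcases hu with huB | huQ
    · exact ⟨u, huB, Reachable.refl _⟩
    · obtain ⟨huP, hua⟩ := huQ
      rw [Walk.mem_verts_toSubgraph] at huP
      rw [Set.mem_singleton_iff] at hua
      obtain ⟨d, q, hd, hle, haq⟩ := path_escape P hP a u huP hua
      have hqQ : q.toSubgraph ≤ Q :=
        toSubgraph_le_deleteVerts hle (fun x hx hxa => haq ((Set.mem_singleton_iff.mp hxa) ▸ hx))
      have hqD : q.toSubgraph ≤ B ⊔ Q := le_trans hqQ le_sup_right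
      have hr := reach_of_walk q hqD
      have hdB : d ∈ B.verts := by
        refine ⟨?_, ?_⟩
        · rcases hd with rfl | rfl
          · exact hy
          · exact hc
        · rw [Set.mem_singleton_iff]
          intro hda
          exact haq (hda ▸ q.end_mem_support)
      exact ⟨d, hdB, hr⟩
  intro u w
  obtain ⟨t1, ht1, hr1⟩ := anchor u.1 u.2
  obtain ⟨t2, ht2, hr2⟩ := anchor w.1 w.2
  have hB12 : B.coe.Reachable ⟨t1, ht1⟩ ⟨t2, ht2⟩ := hBpre _ _
  have hlift := Reachable.map (Subgraph.inclusion (le_sup_left : B ≤ B ⊔ Q)) hB12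
  exact (hr1.trans hlift).trans hr2.symm

end Aux4

section Aux5
variable {W : Type*} {G : SimpleGraph W}

lemma adj_mem_block [Finite W] (hG : G.Connected) {Y : G.Subgraph}
    (hblock : IsBlock G Y) {y z c : W} (hy : y ∈ Y.verts) (hync : ¬ IsCutVertex G y)
    (hc : c ∈ Y.verts) (hcc : IsCutVertex G c) (hadj : G.Adj y z) : z ∈ Y.verts := by
  classical
  have hyc : y ≠ c := fun h => hync (h ▸ hcc)
  have hpre : (G.induce {w | w ≠ y}).Preconnected := (not_cutVertex_iff hG y).mp hync
  have hzy : z ≠ y := fun h => (G.irrefl (h ▸ hadj))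
  have hcy : c ≠ y := Ne.symm hyc
  obtain ⟨wk⟩ := hpre ⟨z, hzy⟩ ⟨c, hcy⟩
  set emb := SimpleGraph.Embedding.induce (G := G) {w | w ≠ y} with hemb
  set w1 : G.Walk z c := wk.map emb.toHom with hw1
  have hw1y : y ∉ w1.support := by
    intro hmem
    simp only [hw1] at hmem
    obtain ⟨x, _, hx⟩ := List.mem_map.mp ((congrArg (y ∈ ·) (Walk.support_map emb.toHom wk)).mp hmem)
    exact x.2 hx
  set p0 := w1.toPath with hp0
  have hp0y : y ∉ p0.1.support := fun h => hw1y (w1.support_toPath_subset h)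
  set P := Walk.cons hadj p0.1 with hP
  have hPpath : P.IsPath := by
    rw [hP, Walk.cons_isPath_iff]
    exact ⟨p0.2, hp0y⟩
  have h2c := ear hblock.1 hy hc hyc P hPpath
  have heq := hblock.2 (Y ⊔ P.toSubgraph) le_sup_left h2c
  have hzP : z ∈ P.toSubgraph.verts := by
    rw [Walk.mem_verts_toSubgraph, hP, Walk.support_cons]
    exact List.mem_cons_of_mem _ p0.1.start_mem_support
  have : z ∈ (Y ⊔ P.toSubgraph).verts := Or.inr hzP
  rwa [heq] at this

end Aux5

section Aux6

lemma leaf_attach {V : Type*} [Fintype V] {G : SimpleGraph V} (hG : G.Connected)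
    {H' : SimpleGraph (V ⊕ Unit)} (h1' : ∀ a b : V, H'.Adj (inl a) (inl b) ↔ G.Adj a b)
    (h2' : TwoConnConv H') {Y : G.Subgraph}
    (hblock : IsBlock G Y)
    (huniq : ∃! v : V, v ∈ Y.verts ∧ IsCutVertex G v)
    (y0 : V) (hy0 : y0 ∈ Y.verts) (hy0c : ¬ IsCutVertex G y0) :
    ∃ y ∈ Y.verts, ¬ IsCutVertex G y ∧ H'.Adj (inr ()) (inl y) := by
  classical
  by_contra hno
  push_neg at hno
  obtain ⟨c, ⟨hcY, hcc⟩, hcu⟩ := huniq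
  have stay : ∀ (u v : V ⊕ Unit) (w : H'.Walk u v), (∀ x ∈ w.support, x ≠ inl c) →
      (∃ yy : V, u = inl yy ∧ yy ∈ Y.verts ∧ ¬ IsCutVertex G yy) →
      (∃ yy : V, v = inl yy ∧ yy ∈ Y.verts ∧ ¬ IsCutVertex G yy) := by
    intro u v w
    induction w with
    | nil => exact fun _ h => h
    | @cons u' x' v' hadj p ih =>
      intro hsup hu
      obtain ⟨yy, rfl, hyY, hyc⟩ := hu
      have hsup' : ∀ x ∈ p.support, x ≠ inl c := by
        intro x hx
        exact hsup x (by rw [Walk.support_cons]; exact List.mem_cons_of_mem _ hx)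
      cases x' with
      | inl z =>
        have hGz : G.Adj yy z := (h1' _ _).mp hadj
        have hzY : z ∈ Y.verts := adj_mem_block hG hblock hyY hyc hcY hcc hGz
        have hzc : z ≠ c := by
          have := hsup' (inl z) p.start_mem_support
          intro h; exact this (by rw [h])
        have hznc : ¬ IsCutVertex G z := fun hcut => hzc (hcu z ⟨hzY, hcut⟩)
        exact ih hsup' ⟨z, rfl, hzY, hznc⟩
      | inr u'' =>
        cases u''
        exact absurd hadj.symm (hno yy hyY hyc)
  have hcut : IsCutVertex H' (inl c) := by
    rw [IsCutVertex, numComponents_eq_one h2'.1]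
    have hy0ne : ((inl y0 : V ⊕ Unit)) ≠ inl c := by
      intro h
      injection h with h'
      exact hy0c (h' ▸ hcc)
    refine one_lt_numComponents
      (u := (⟨inl y0, hy0ne⟩ : {w : V ⊕ Unit | w ≠ inl c}))
      (v := ⟨inr (), by simp⟩) ?_
    rintro ⟨wk⟩
    set emb := SimpleGraph.Embedding.induce (G := H') {w | w ≠ inl c} with hemb
    set wk' : H'.Walk (inl y0) (inr ()) := wk.map emb.toHom with hwk'
    have hsup : ∀ x ∈ wk'.support, x ≠ inl c := by
      intro x hx
      simp only [hwk'] at hx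
      obtain ⟨x', _, hx'⟩ := List.mem_map.mp ((congrArg (x ∈ ·) (Walk.support_map emb.toHom wk)).mp hx)
      exact hx' ▸ x'.2
    obtain ⟨yy, heq, -⟩ := stay _ _ wk' hsup ⟨y0, rfl, hy0, hy0c⟩
    simp at heq
  exact h2'.2 (inl c) hcut

end Aux6


theorem stmt10 {V : Type*} [Fintype V] (G : SimpleGraph V)
    (pos : V → EuclideanSpace ℝ (Fin 2)) (s0 : EuclideanSpace ℝ (Fin 2)) (r : ℝ)
    (hconn : G.Connected) (hnot2 : ¬ TwoConnConv G)
    -- the disk of radius `r` about `s0` meets the interior of every leaf block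
    (hcov : ∀ Y : G.Subgraph, IsLeafBlock G Y →
      ∃ y ∈ Y.verts, ¬ IsCutVertex G y ∧ dist s0 (pos y) ≤ r)
    -- `r` is the smallest such radius (over all centres): smallest colour-spanning disk
    (hmin : ∀ (z : EuclideanSpace ℝ (Fin 2)) (r' : ℝ),
      (∀ Y : G.Subgraph, IsLeafBlock G Y →
        ∃ y ∈ Y.verts, ¬ IsCutVertex G y ∧ dist z (pos y) ≤ r') → r ≤ r')
    -- `f` chooses, for each leaf block, a closest interior vertex to `s0`,
    -- lying within the disk
    (f : G.Subgraph → V)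
    (hf : ∀ Y : G.Subgraph, IsLeafBlock G Y → f Y ∈ Y.verts ∧ ¬ IsCutVertex G (f Y) ∧
      dist s0 (pos (f Y)) ≤ r ∧
      ∀ z ∈ Y.verts, ¬ IsCutVertex G z → dist s0 (pos (f Y)) ≤ dist s0 (pos z))
    -- `GSD` is `G` plus the new vertex `s0` joined to the chosen vertices
    (GSD : SimpleGraph (V ⊕ Unit))
    (h1 : ∀ a b : V, GSD.Adj (inl a) (inl b) ↔ G.Adj a b)
    (h2 : ∀ y : V, GSD.Adj (inr ()) (inl y) ↔ ∃ Y : G.Subgraph, IsLeafBlock G Y ∧ f Y = y)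
    -- `H'` is an arbitrary 1-block closure of `G`, with Steiner point placed at `s`
    (H' : SimpleGraph (V ⊕ Unit)) (s : EuclideanSpace ℝ (Fin 2))
    (h1' : ∀ a b : V, H'.Adj (inl a) (inl b) ↔ G.Adj a b)
    (h2' : TwoConnConv H') :
    maxEdgeLen GSD (Sum.elim pos fun _ => s0) ≤ maxEdgeLen H' (Sum.elim pos fun _ => s) := by

  classical
  set q' : V ⊕ Unit → EuclideanSpace ℝ (Fin 2) := Sum.elim pos fun _ => s with hq'
  set T : Set ℝ := {d | ∃ a b : V ⊕ Unit, H'.Adj a b ∧ d = dist (q' a) (q' b)} with hT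
  have hTfin : T.Finite := by
    have hsub : T ⊆ (fun ab : (V ⊕ Unit) × (V ⊕ Unit) => dist (q' ab.1) (q' ab.2)) '' Set.univ := by
      rintro d ⟨a, b, hab, rfl⟩
      exact ⟨(a, b), trivial, rfl⟩
    exact Set.Finite.subset (Set.Finite.image _ Set.finite_univ) hsub
  have hTbdd : BddAbove T := hTfin.bddAbove
  have hMT : maxEdgeLen H' q' = sSup T := rfl
  obtain ⟨v0⟩ := hconn.nonempty
  have hre : H'.Reachable (inl v0) (inr ()) := h2'.1.preconnected _ _
  have hedge : ∃ a b : V ⊕ Unit, H'.Adj a b := by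
    obtain ⟨wk⟩ := hre
    cases wk with
    | cons h p => exact ⟨_, _, h⟩
  obtain ⟨a0, b0, hab0⟩ := hedge
  have hM0 : 0 ≤ maxEdgeLen H' q' :=
    le_trans dist_nonneg (le_csSup hTbdd ⟨a0, b0, hab0, rfl⟩)
  have hrM : r ≤ maxEdgeLen H' q' := by
    refine hmin s _ ?_
    intro Y hY
    obtain ⟨y0, hy0, hy0c, -⟩ := hcov Y hY
    obtain ⟨y, hyY, hyc, hadj⟩ := leaf_attach hconn h1' h2' hY.1 hY.2 y0 hy0 hy0c
    refine ⟨y, hyY, hyc, ?_⟩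
    have heq : dist s (pos y) = dist (q' (inr ())) (q' (inl y)) := rfl
    rw [heq]
    exact le_csSup hTbdd ⟨_, _, hadj, rfl⟩
  rw [maxEdgeLen]
  refine Real.sSup_le ?_ hM0
  rintro d ⟨a, b, hab, rfl⟩
  cases a with
  | inl a =>
    cases b with
    | inl b =>
      have hH : H'.Adj (inl a) (inl b) := (h1' a b).mpr ((h1 a b).mp hab)
      exact le_csSup hTbdd ⟨_, _, hH, rfl⟩
    | inr u =>
      cases u
      have hadj' := hab.symm
      rw [h2 a] at hadj'
      obtain ⟨Y, hY, hfy⟩ := hadj'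
      have hr' := (hf Y hY).2.2.1
      rw [hfy] at hr'
      simp only [Sum.elim_inl, Sum.elim_inr]
      exact le_trans (le_of_eq (dist_comm _ _)) (le_trans hr' hrM)
  | inr u =>
    cases u
    cases b with
    | inl b =>
      rw [h2 b] at hab
      obtain ⟨Y, hY, hfy⟩ := hab
      have hr' := (hf Y hY).2.2.1
      rw [hfy] at hr'
      simp only [Sum.elim_inl, Sum.elim_inr]
      exact le_trans hr' hrM
    | inr u' =>
      cases u'
      exact absurd rfl hab.ne
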